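/- Let 𝕜 be a commutative ring, k ≥ 2, and R = 𝕜[x_1,…,x_k]/(x_1x_2⋯x_k). Fix 2 ≤ j ≤ m ≤ k and let I ⊆ [1,k] be a nonempty subinterval. Let μ : R/(x_{[j,m]}) → R/(x_{[j−1,m]}) be the R-linear map given by multiplication by x_{j−1} (well defined since x_{j−1}·(x_{[j,m]}) ⊆ (x_{[j−1,m]})), and consider the R-linear map Hom_R(R/(x_{[j−1,m]}), R/(x_I)) → Hom_R(R/(x_{[j,m]}), R/(x_I)) given by precomposition with μ. Then its cokernel is zero if I is not contained in [j,k], and is isomorphic as an R-module to R/((x_{j−1}) + (x_{I∩[j,m]})) if I ⊆ [j,k]. -/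

import Mathlib

/-!
Evaluation at `1` identifies `Hom_R(R/(f), W)` with the `f`-torsion of `W`, and turns
precomposition with `μ` into multiplication by `x_{j-1}`. Write `A = [j,m]`, `A' = [j-1,m]` and
`U = [1,k]`. Lifted to the polynomial ring, `W = R/(x_I)` is the quotient by the squarefree
monomial ideal `(x_U, x_I)`, whose colon ideal by `x_A` is `(x_{U \ A}, x_{I \ A})`.
As `x_{U \ A} = x_{j-1} x_{U \ A'}`, the cokernel is generated by the class of `x_{I \ A}`.
If `j - 1 ∈ I` this class is `x_{j-1} x_{I \ A'}`, and if `I ∩ A = ∅` it is `x_I = 0`; in both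
cases the map is onto. Otherwise the annihilator of the generator is
`((x_{j-1}, x_I) : x_{I \ A}) = (x_{j-1}, x_{I ∩ A})`.
-/

open MvPolynomial

/-- The ring `R = 𝕜[x₁,…,x_k]/(x₁x₂⋯x_k)`, with variables indexed by `Fin k`
(the variable `x_m` of the paper, `1 ≤ m ≤ k`, corresponds to `m - 1 : Fin k`). -/
abbrev NodalRing (𝕜 : Type*) [CommRing 𝕜] (k : ℕ) : Type _ :=
  MvPolynomial (Fin k) 𝕜 ⧸
    Ideal.span {∏ i : Fin k, (X i : MvPolynomial (Fin k) 𝕜)}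

/-- `x_{[a,b]}`: the image in `R` of the monomial `∏_{a ≤ m ≤ b} x_m`
(an empty product is `1`). -/
noncomputable def xIcc (𝕜 : Type*) [CommRing 𝕜] (k a b : ℕ) : NodalRing 𝕜 k :=
  Ideal.Quotient.mk _
    (∏ t ∈ Finset.univ.filter (fun t : Fin k => a ≤ (t : ℕ) + 1 ∧ (t : ℕ) + 1 ≤ b),
      X t)

section QuotientSpanSingleton

variable {R M : Type*} [CommRing R] [AddCommGroup M] [Module R M]

theorem quotSpanSingleton_hom_ext {f : R} {φ ψ : (R ⧸ Ideal.span {f}) →ₗ[R] M}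
    (h : φ (Submodule.Quotient.mk 1) = ψ (Submodule.Quotient.mk 1)) : φ = ψ :=
  Submodule.linearMap_qext _ (LinearMap.ext_ring h)

theorem smul_apply_mk_one_eq_zero (f : R) (φ : (R ⧸ Ideal.span {f}) →ₗ[R] M) :
    f • φ (Submodule.Quotient.mk 1) = 0 := by
  rw [← map_smul, ← Submodule.Quotient.mk_smul, smul_eq_mul, mul_one,
    (Submodule.Quotient.mk_eq_zero _).2 (Ideal.mem_span_singleton_self f), map_zero]

noncomputable def mulQuotient (c : R) {f g : R} (h : g ∣ c * f) :
    (R ⧸ Ideal.span {f}) →ₗ[R] (R ⧸ Ideal.span {g}) :=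
  Submodule.mapQ _ _ (LinearMap.mulLeft R c) <| (Submodule.span_singleton_le_iff_mem _ _).2 <|
    Ideal.mem_span_singleton.2 h

theorem mulQuotient_mk (c : R) {f g : R} (h : g ∣ c * f) (s : R) :
    mulQuotient c h (Submodule.Quotient.mk s) = Submodule.Quotient.mk (c * s) :=
  rfl

theorem mem_range_lcomp_iff {f g c : R}
    {μ : (R ⧸ Ideal.span {f}) →ₗ[R] (R ⧸ Ideal.span {g})}
    (hμ : μ (Submodule.Quotient.mk 1) = Submodule.Quotient.mk c)
    (ψ : (R ⧸ Ideal.span {f}) →ₗ[R] M) :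
    ψ ∈ LinearMap.range (LinearMap.lcomp R M μ) ↔
      ∃ m : M, g • m = 0 ∧ ψ (Submodule.Quotient.mk 1) = c • m := by
  have lcomp_apply_mk_one : ∀ φ : (R ⧸ Ideal.span {g}) →ₗ[R] M,
      LinearMap.lcomp R M μ φ (Submodule.Quotient.mk 1) = c • φ (Submodule.Quotient.mk 1) := by
    intro φ
    rw [LinearMap.lcomp_apply, hμ, ← map_smul, ← Submodule.Quotient.mk_smul, smul_eq_mul,
      mul_one]
  constructor
  · rintro ⟨φ, rfl⟩
    exact ⟨_, smul_apply_mk_one_eq_zero g φ, lcomp_apply_mk_one φ⟩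
  · rintro ⟨m, hm, hψ⟩
    refine ⟨Submodule.liftQSpanSingleton g (LinearMap.toSpanSingleton R M m) hm,
      quotSpanSingleton_hom_ext ?_⟩
    rw [lcomp_apply_mk_one, hψ]
    exact congrArg (c • ·) (one_smul R m)

theorem Submodule.nonempty_quotient_equiv_quotient_colon {N : Type*} [AddCommGroup N]
    [Module R N] (K : Submodule R N) (g : N) (hgen : ∀ n, ∃ r : R, n - r • g ∈ K) :
    Nonempty ((N ⧸ K) ≃ₗ[R] (R ⧸ K.colon {g})) := by
  let Ψ := K.mkQ ∘ₗ LinearMap.toSpanSingleton R N g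
  have hsurj : Function.Surjective Ψ := by
    intro y
    obtain ⟨n, rfl⟩ := K.mkQ_surjective y
    obtain ⟨r, hr⟩ := hgen n
    refine ⟨r, (Submodule.Quotient.eq K).2 ?_⟩
    rw [LinearMap.toSpanSingleton_apply, ← neg_mem_iff, neg_sub]
    exact hr
  have hker : LinearMap.ker Ψ = K.colon {g} := by
    ext r
    simp [Ψ, ← Submodule.Quotient.mk_smul]
  exact ⟨(Ψ.quotKerEquivOfSurjective hsurj).symm.trans (Submodule.quotEquivOfEq _ _ hker)⟩

end QuotientSpanSingleton

section SquarefreeMonomial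

variable {σ 𝕜 : Type*} [CommSemiring 𝕜]

theorem monomial_mul_mem_span_monomial_image_iff {ι : Type*} (f : ι → σ →₀ ℕ) (s : Set ι)
    (v : σ →₀ ℕ) (p : MvPolynomial σ 𝕜) :
    monomial v 1 * p ∈ Ideal.span ((fun i => monomial (f i) (1 : 𝕜)) '' s) ↔
      p ∈ Ideal.span ((fun i => monomial (f i - v) (1 : 𝕜)) '' s) := by
  have image_eq : ∀ g : ι → σ →₀ ℕ,
      (fun i => monomial (g i) (1 : 𝕜)) '' s = (fun d => monomial d 1) '' (g '' s) :=
    fun g => (Set.image_image (fun d => monomial d 1) g s).symm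
  simp only [image_eq, mem_ideal_span_monomial_image, Set.exists_mem_image]
  constructor
  · intro h e he
    have hve : v + e ∈ (monomial v 1 * p).support := by
      rwa [mem_support_iff, coeff_monomial_mul, one_mul, ← mem_support_iff]
    obtain ⟨i, hi, hle⟩ := h (v + e) hve
    exact ⟨i, hi, tsub_le_iff_left.2 hle⟩
  · intro h d hd
    rw [mem_support_iff, coeff_monomial_mul'] at hd
    split_ifs at hd with hvd
    · obtain ⟨i, hi, hle⟩ := h (d - v) (by rwa [mem_support_iff, ← one_mul (coeff _ p)])
      exact ⟨i, hi, by simpa [add_tsub_cancel_of_le hvd] using tsub_le_iff_left.1 hle⟩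
    · exact absurd rfl hd

theorem prod_X_eq_monomial (S : Finset σ) :
    ∏ i ∈ S, (X i : MvPolynomial σ 𝕜) = monomial (∑ i ∈ S, Finsupp.single i 1) 1 :=
  (monomial_sum_one S _).symm

theorem sum_single_one_sub_sum_single_one [DecidableEq σ] (S T : Finset σ) :
    ∑ i ∈ T, Finsupp.single i 1 - ∑ i ∈ S, Finsupp.single i 1 =
      ∑ i ∈ T \ S, Finsupp.single i (1 : ℕ) := by
  ext i
  simp only [Finsupp.tsub_apply, Finsupp.finsetSum_apply, Finsupp.single_apply,
    Finset.sum_ite_eq', Finset.mem_sdiff]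
  split_ifs <;> simp_all

theorem prod_X_mul_mem_span_image_iff [DecidableEq σ] (S : Finset σ) (𝒯 : Set (Finset σ))
    (p : MvPolynomial σ 𝕜) :
    (∏ i ∈ S, X i) * p ∈ Ideal.span ((fun T => ∏ i ∈ T, X i) '' 𝒯) ↔
      p ∈ Ideal.span ((fun T => ∏ i ∈ T \ S, X i) '' 𝒯) := by
  simp only [prod_X_eq_monomial, ← sum_single_one_sub_sum_single_one S]
  exact monomial_mul_mem_span_monomial_image_iff _ _ _ _

end SquarefreeMonomial

noncomputable def xSet (𝕜 : Type*) [CommRing 𝕜] {k : ℕ} (S : Finset (Fin k)) :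
    NodalRing 𝕜 k :=
  Ideal.Quotient.mk _ (∏ i ∈ S, X i)

def varsIcc (k a b : ℕ) : Finset (Fin k) :=
  Finset.univ.filter (fun t : Fin k => a ≤ (t : ℕ) + 1 ∧ (t : ℕ) + 1 ≤ b)

theorem xIcc_eq_xSet (𝕜 : Type*) [CommRing 𝕜] (k a b : ℕ) :
    xIcc 𝕜 k a b = xSet 𝕜 (varsIcc k a b) :=
  rfl

theorem mem_varsIcc {k a b : ℕ} {t : Fin k} :
    t ∈ varsIcc k a b ↔ a ≤ t + 1 ∧ t + 1 ≤ b := by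
  simp [varsIcc]

theorem varsIcc_inter_varsIcc (k a b a' b' : ℕ) :
    varsIcc k a b ∩ varsIcc k a' b' = varsIcc k (max a a') (min b b') := by
  ext t
  simp only [Finset.mem_inter, mem_varsIcc]
  omega

section NodalRing

variable {𝕜 : Type*} [CommRing 𝕜] {k : ℕ}

theorem xSet_mul_xSet {S T : Finset (Fin k)} (h : Disjoint S T) :
    xSet 𝕜 S * xSet 𝕜 T = xSet 𝕜 (S ∪ T) := by
  rw [xSet, xSet, xSet, ← map_mul, Finset.prod_union h]

theorem xSet_singleton (c : Fin k) : xSet 𝕜 {c} = Ideal.Quotient.mk _ (X c) := by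
  rw [xSet, Finset.prod_singleton]

theorem xSet_insert {c : Fin k} {S : Finset (Fin k)} (hc : c ∉ S) :
    xSet 𝕜 (insert c S) = xSet 𝕜 {c} * xSet 𝕜 S := by
  rw [xSet_mul_xSet (Finset.disjoint_singleton_left.2 hc), Finset.insert_eq]

theorem xSet_mem_span_singleton {S T : Finset (Fin k)} (h : S ⊆ T) :
    xSet 𝕜 T ∈ Ideal.span {xSet 𝕜 S} := by
  refine Ideal.mem_span_singleton'.2 ⟨xSet 𝕜 (T \ S), ?_⟩
  rw [mul_comm, xSet_mul_xSet Finset.disjoint_sdiff, Finset.union_sdiff_of_subset h]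

/-- The extra generator `x_{univ \ S}` accounts for the relation `x_1 ⋯ x_k = 0`. -/
theorem xSet_mul_mem_span_image_iff (S : Finset (Fin k)) (𝒯 : Set (Finset (Fin k)))
    (r : NodalRing 𝕜 k) :
    xSet 𝕜 S * r ∈ Ideal.span (xSet 𝕜 '' 𝒯) ↔
      r ∈ Ideal.span ((fun T => xSet 𝕜 (T \ S)) '' insert Finset.univ 𝒯) := by
  obtain ⟨p, rfl⟩ := Ideal.Quotient.mk_surjective r
  have span_xSet_image : ∀ 𝒮 : Set (Finset (Fin k)), Ideal.span (xSet 𝕜 '' 𝒮) =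
      (Ideal.span ((fun T => ∏ i ∈ T, X i) '' 𝒮)).map (Ideal.Quotient.mk _) := by
    intro 𝒮
    rw [Ideal.map_span, Set.image_image]
    rfl
  have span_insert_univ : ∀ 𝒮 : Set (Finset (Fin k)),
      Ideal.span ((fun T => ∏ i ∈ T, X i) '' 𝒮) ⊔ Ideal.span {∏ i : Fin k, X i} =
        Ideal.span ((fun T => ∏ i ∈ T, (X i : MvPolynomial (Fin k) 𝕜)) ''
          insert Finset.univ 𝒮) := by
    intro 𝒮
    rw [Set.image_insert_eq, Ideal.span_insert, sup_comm]
  have univ_mem : (∏ i : Fin k, X i : MvPolynomial (Fin k) 𝕜) ∈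
      Ideal.span ((fun T => ∏ i ∈ T \ S, X i) '' insert Finset.univ 𝒯) := by
    rw [← Finset.prod_sdiff (Finset.subset_univ S)]
    exact Ideal.mul_mem_right _ _ (Ideal.subset_span ⟨_, Set.mem_insert _ _, rfl⟩)
  rw [xSet, ← map_mul, span_xSet_image, Ideal.mem_quotient_iff_mem_sup, span_insert_univ,
    prod_X_mul_mem_span_image_iff, ← Set.image_image (xSet 𝕜) (· \ S), span_xSet_image,
    Ideal.mem_quotient_iff_mem_sup, Set.image_image,
    sup_eq_left.2 ((Ideal.span_singleton_le_iff_mem _).2 univ_mem)]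

theorem xSet_singleton_mul_xSet_sdiff_insert {c : Fin k} {S A : Finset (Fin k)} (hcS : c ∈ S)
    (hcA : c ∉ A) : xSet 𝕜 {c} * xSet 𝕜 (S \ insert c A) = xSet 𝕜 (S \ A) := by
  rw [xSet_mul_xSet (by simp)]
  congr 1
  ext t
  by_cases htc : t = c
  · subst htc
    simp [hcS, hcA]
  · simp [htc]

theorem xSet_mul_mem_span_singleton_iff (A I : Finset (Fin k)) (r : NodalRing 𝕜 k) :
    xSet 𝕜 A * r ∈ Ideal.span {xSet 𝕜 I} ↔
      r ∈ Ideal.span {xSet 𝕜 (Finset.univ \ A), xSet 𝕜 (I \ A)} := by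
  have h := xSet_mul_mem_span_image_iff A {I} r
  rwa [Set.image_singleton, Set.image_pair] at h

theorem xSet_smul_mk_eq_zero {A I : Finset (Fin k)} {r : NodalRing 𝕜 k}
    (hr : r ∈ Ideal.span {xSet 𝕜 (Finset.univ \ A), xSet 𝕜 (I \ A)}) :
    xSet 𝕜 A • (Submodule.Quotient.mk r : NodalRing 𝕜 k ⧸ Ideal.span {xSet 𝕜 I}) = 0 := by
  rwa [← Submodule.Quotient.mk_smul, Submodule.Quotient.mk_eq_zero, smul_eq_mul,
    xSet_mul_mem_span_singleton_iff]

theorem exists_apply_mk_one_eq {A I : Finset (Fin k)}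
    (φ : (NodalRing 𝕜 k ⧸ Ideal.span {xSet 𝕜 A}) →ₗ[NodalRing 𝕜 k]
      (NodalRing 𝕜 k ⧸ Ideal.span {xSet 𝕜 I})) :
    ∃ α β : NodalRing 𝕜 k, φ (Submodule.Quotient.mk 1) =
      Submodule.Quotient.mk (α * xSet 𝕜 (Finset.univ \ A) + β * xSet 𝕜 (I \ A)) := by
  obtain ⟨r, hr⟩ := Submodule.Quotient.mk_surjective _ (φ (Submodule.Quotient.mk 1))
  have hann := smul_apply_mk_one_eq_zero _ φ
  rw [← hr, ← Submodule.Quotient.mk_smul, Submodule.Quotient.mk_eq_zero, smul_eq_mul,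
    xSet_mul_mem_span_singleton_iff, Ideal.mem_span_pair] at hann
  obtain ⟨α, β, rfl⟩ := hann
  exact ⟨α, β, hr.symm⟩

theorem surjective_lcomp_of_mem_or_disjoint {c : Fin k} {A A' I : Finset (Fin k)} (hcA : c ∉ A)
    (hA' : A' = insert c A) (hI : c ∈ I ∨ Disjoint I A)
    {μ : (NodalRing 𝕜 k ⧸ Ideal.span {xSet 𝕜 A}) →ₗ[NodalRing 𝕜 k]
      (NodalRing 𝕜 k ⧸ Ideal.span {xSet 𝕜 A'})}
    (hμ : μ (Submodule.Quotient.mk 1) = Submodule.Quotient.mk (xSet 𝕜 {c})) :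
    Function.Surjective
      (LinearMap.lcomp (NodalRing 𝕜 k) (NodalRing 𝕜 k ⧸ Ideal.span {xSet 𝕜 I}) μ) := by
  subst hA'
  intro ψ
  obtain ⟨α, β, hψ⟩ := exists_apply_mk_one_eq ψ
  refine LinearMap.mem_range.1 ((mem_range_lcomp_iff hμ ψ).2 ?_)
  rcases hI with hcI | hIA
  · refine ⟨Submodule.Quotient.mk
      (α * xSet 𝕜 (Finset.univ \ insert c A) + β * xSet 𝕜 (I \ insert c A)),
      xSet_smul_mk_eq_zero (Ideal.mem_span_pair.2 ⟨α, β, rfl⟩), ?_⟩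
    rw [hψ, ← Submodule.Quotient.mk_smul, smul_eq_mul, mul_add, mul_left_comm _ α,
      mul_left_comm _ β, xSet_singleton_mul_xSet_sdiff_insert (Finset.mem_univ c) hcA,
      xSet_singleton_mul_xSet_sdiff_insert hcI hcA]
  · refine ⟨Submodule.Quotient.mk (α * xSet 𝕜 (Finset.univ \ insert c A)),
      xSet_smul_mk_eq_zero (Ideal.mem_span_pair.2 ⟨α, 0, by rw [zero_mul, add_zero]⟩), ?_⟩
    rw [hψ, ← Submodule.Quotient.mk_smul, smul_eq_mul, mul_left_comm,
      xSet_singleton_mul_xSet_sdiff_insert (Finset.mem_univ c) hcA, Submodule.Quotient.eq,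
      add_sub_cancel_left, Finset.sdiff_eq_self_of_disjoint hIA]
    exact Ideal.mul_mem_left _ _ (Ideal.mem_span_singleton_self _)

theorem mem_sup_of_mul_xSet_sdiff_mem {c : Fin k} {A I : Finset (Fin k)} (hcI : c ∉ I)
    {r : NodalRing 𝕜 k} (h : r * xSet 𝕜 (I \ A) ∈ Ideal.span {xSet 𝕜 {c}, xSet 𝕜 I}) :
    r ∈ Ideal.span {xSet 𝕜 {c}} ⊔ Ideal.span {xSet 𝕜 (I ∩ A)} := by
  have hcIA : c ∉ I \ A := fun h => hcI (Finset.mem_sdiff.1 h).1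
  rw [mul_comm, ← Set.image_pair, xSet_mul_mem_span_image_iff, Set.image_insert_eq,
    Set.image_pair, Finset.sdiff_eq_self_of_disjoint (Finset.disjoint_singleton_left.2 hcIA),
    sdiff_sdiff_right_self, Finset.inf_eq_inter] at h
  refine Ideal.span_le.2 ?_ h
  simp only [Set.insert_subset_iff, Set.singleton_subset_iff, SetLike.mem_coe]
  exact ⟨Ideal.mem_sup_left (xSet_mem_span_singleton (by simpa using hcIA)),
    Ideal.mem_sup_left (Ideal.mem_span_singleton_self _),
    Ideal.mem_sup_right (Ideal.mem_span_singleton_self _)⟩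

variable (𝕜) in
noncomputable def xSetSdiffHom (A I : Finset (Fin k)) :
    (NodalRing 𝕜 k ⧸ Ideal.span {xSet 𝕜 A}) →ₗ[NodalRing 𝕜 k]
      (NodalRing 𝕜 k ⧸ Ideal.span {xSet 𝕜 I}) :=
  Submodule.liftQSpanSingleton _
    (LinearMap.toSpanSingleton _ _ (Submodule.Quotient.mk (xSet 𝕜 (I \ A))))
    (by
      rw [LinearMap.toSpanSingleton_apply]
      exact xSet_smul_mk_eq_zero (Ideal.subset_span (Set.mem_insert_of_mem _ rfl)))

theorem xSetSdiffHom_mk_one (A I : Finset (Fin k)) :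
    xSetSdiffHom 𝕜 A I (Submodule.Quotient.mk 1) = Submodule.Quotient.mk (xSet 𝕜 (I \ A)) := by
  rw [xSetSdiffHom, Submodule.liftQSpanSingleton_apply, LinearMap.toSpanSingleton_apply,
    one_smul]

section Cokernel

variable {c : Fin k} {A A' I : Finset (Fin k)}
  {μ : (NodalRing 𝕜 k ⧸ Ideal.span {xSet 𝕜 A}) →ₗ[NodalRing 𝕜 k]
    (NodalRing 𝕜 k ⧸ Ideal.span {xSet 𝕜 A'})}

theorem exists_sub_smul_xSetSdiffHom_mem_range (hcA : c ∉ A) (hA' : A' = insert c A)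
    (hμ : μ (Submodule.Quotient.mk 1) = Submodule.Quotient.mk (xSet 𝕜 {c}))
    (φ : (NodalRing 𝕜 k ⧸ Ideal.span {xSet 𝕜 A}) →ₗ[NodalRing 𝕜 k]
      (NodalRing 𝕜 k ⧸ Ideal.span {xSet 𝕜 I})) :
    ∃ r : NodalRing 𝕜 k, φ - r • xSetSdiffHom 𝕜 A I ∈
      LinearMap.range
        (LinearMap.lcomp (NodalRing 𝕜 k) (NodalRing 𝕜 k ⧸ Ideal.span {xSet 𝕜 I}) μ) := by
  subst hA'
  obtain ⟨α, β, hφ⟩ := exists_apply_mk_one_eq φ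
  refine ⟨β, (mem_range_lcomp_iff hμ _).2 ⟨Submodule.Quotient.mk
    (α * xSet 𝕜 (Finset.univ \ insert c A)),
    xSet_smul_mk_eq_zero (Ideal.mem_span_pair.2 ⟨α, 0, by rw [zero_mul, add_zero]⟩), ?_⟩⟩
  rw [LinearMap.sub_apply, LinearMap.smul_apply, hφ, xSetSdiffHom_mk_one,
    ← Submodule.Quotient.mk_smul, ← Submodule.Quotient.mk_smul, ← Submodule.Quotient.mk_sub,
    smul_eq_mul, smul_eq_mul, mul_left_comm,
    xSet_singleton_mul_xSet_sdiff_insert (Finset.mem_univ c) hcA, add_sub_cancel_right]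

theorem colon_range_lcomp_eq (hA' : A' = insert c A) (hcI : c ∉ I)
    (hμ : μ (Submodule.Quotient.mk 1) = Submodule.Quotient.mk (xSet 𝕜 {c})) :
    (LinearMap.range (LinearMap.lcomp (NodalRing 𝕜 k)
        (NodalRing 𝕜 k ⧸ Ideal.span {xSet 𝕜 I}) μ)).colon {xSetSdiffHom 𝕜 A I} =
      Ideal.span {xSet 𝕜 {c}} ⊔ Ideal.span {xSet 𝕜 (I ∩ A)} := by
  subst hA'
  have mem_colon_iff : ∀ r, r ∈ (LinearMap.range (LinearMap.lcomp (NodalRing 𝕜 k)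
        (NodalRing 𝕜 k ⧸ Ideal.span {xSet 𝕜 I}) μ)).colon {xSetSdiffHom 𝕜 A I} ↔
      ∃ m : NodalRing 𝕜 k ⧸ Ideal.span {xSet 𝕜 I}, xSet 𝕜 (insert c A) • m = 0 ∧
        r • Submodule.Quotient.mk (xSet 𝕜 (I \ A)) = xSet 𝕜 {c} • m := by
    intro r
    rw [Submodule.mem_colon_singleton, mem_range_lcomp_iff hμ, LinearMap.smul_apply,
      xSetSdiffHom_mk_one]
  apply le_antisymm
  · intro r hr
    obtain ⟨m, -, hm⟩ := (mem_colon_iff r).1 hr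
    obtain ⟨s, rfl⟩ := Submodule.Quotient.mk_surjective _ m
    rw [← Submodule.Quotient.mk_smul, ← Submodule.Quotient.mk_smul, Submodule.Quotient.eq,
      smul_eq_mul, smul_eq_mul] at hm
    refine mem_sup_of_mul_xSet_sdiff_mem hcI ?_
    rw [← sub_add_cancel (r * _) (xSet 𝕜 {c} * s)]
    exact add_mem (Ideal.span_mono (by simp) hm)
      (Ideal.mul_mem_right _ _ (Ideal.subset_span (by simp)))
  · refine sup_le ((Ideal.span_singleton_le_iff_mem _).2 ((mem_colon_iff _).2 ⟨_, ?_, rfl⟩))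
      ((Ideal.span_singleton_le_iff_mem _).2 ((mem_colon_iff _).2 ⟨0, smul_zero _, ?_⟩))
    · apply xSet_smul_mk_eq_zero
      rw [Finset.sdiff_insert_of_notMem hcI]
      exact Ideal.subset_span (Set.mem_insert_of_mem _ rfl)
    · rw [smul_zero, ← Submodule.Quotient.mk_smul, smul_eq_mul, Submodule.Quotient.mk_eq_zero,
        mul_comm, xSet_mul_xSet (Finset.disjoint_sdiff_inter I A), Finset.sdiff_union_inter]
      exact Ideal.mem_span_singleton_self _

end Cokernel

end NodalRing

/-- **Componentwise identification of `M{[j-1],[j,m]}` with an extension by zero.**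
For `2 ≤ j ≤ m ≤ k` and a nonempty subinterval `I = [a,b] ⊆ [1,k]`, let
`μ : R/(x_{[j,m]}) → R/(x_{[j-1,m]})` be multiplication by `x_{j-1}`.  The cokernel
of precomposition with `μ`, as a map
`Hom_R(R/(x_{[j-1,m]}), R/(x_I)) → Hom_R(R/(x_{[j,m]}), R/(x_I))`,
is zero if `I ⊄ [j,k]`, and is isomorphic to `R/((x_{j-1}) + (x_{I ∩ [j,m]}))`
if `I ⊆ [j,k]`. -/
theorem stmt_15 (𝕜 : Type*) [CommRing 𝕜] (k : ℕ)
    (j m : ℕ) (hj : 2 ≤ j) (hjm : j ≤ m) (hmk : m ≤ k)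
    (a b : ℕ) (hab : a ≤ b) (hbk : b ≤ k) :
    ∃ (μ : (NodalRing 𝕜 k ⧸ Ideal.span {xIcc 𝕜 k j m}) →ₗ[NodalRing 𝕜 k]
          (NodalRing 𝕜 k ⧸ Ideal.span {xIcc 𝕜 k (j - 1) m}))
      (T : ((NodalRing 𝕜 k ⧸ Ideal.span {xIcc 𝕜 k (j - 1) m}) →ₗ[NodalRing 𝕜 k]
              (NodalRing 𝕜 k ⧸ Ideal.span {xIcc 𝕜 k a b})) →ₗ[NodalRing 𝕜 k]
           ((NodalRing 𝕜 k ⧸ Ideal.span {xIcc 𝕜 k j m}) →ₗ[NodalRing 𝕜 k]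
              (NodalRing 𝕜 k ⧸ Ideal.span {xIcc 𝕜 k a b}))),
      (∀ s : NodalRing 𝕜 k,
        μ (Submodule.Quotient.mk s)
          = Submodule.Quotient.mk
              ((Ideal.Quotient.mk _ (X (⟨j - 2, by omega⟩ : Fin k)) :
                NodalRing 𝕜 k) * s)) ∧
      (∀ φ, T φ = φ.comp μ) ∧
      (¬ Finset.Icc a b ⊆ Finset.Icc j k → Function.Surjective T) ∧
      (Finset.Icc a b ⊆ Finset.Icc j k → Nonempty
        (((((NodalRing 𝕜 k ⧸ Ideal.span {xIcc 𝕜 k j m}) →ₗ[NodalRing 𝕜 k]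
              (NodalRing 𝕜 k ⧸ Ideal.span {xIcc 𝕜 k a b})) ⧸ LinearMap.range T))
          ≃ₗ[NodalRing 𝕜 k]
          (NodalRing 𝕜 k ⧸
            (Ideal.span {(Ideal.Quotient.mk _ (X (⟨j - 2, by omega⟩ : Fin k)) :
                NodalRing 𝕜 k)} ⊔
             Ideal.span {xIcc 𝕜 k (max a j) (min b m)})))) := by
  set c : Fin k := ⟨j - 2, by omega⟩
  have hcA : c ∉ varsIcc k j m := by
    simp only [mem_varsIcc, c]
    omega
  have hA' : varsIcc k (j - 1) m = insert c (varsIcc k j m) := by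
    ext t
    simp only [mem_varsIcc, Finset.mem_insert, c, Fin.ext_iff]
    omega
  have hdvd : xIcc 𝕜 k (j - 1) m ∣ Ideal.Quotient.mk _ (X c) * xIcc 𝕜 k j m := by
    rw [xIcc_eq_xSet, hA', xSet_insert hcA, xSet_singleton, xIcc_eq_xSet]
  have hμ : mulQuotient _ hdvd (Submodule.Quotient.mk 1) =
      Submodule.Quotient.mk (xSet 𝕜 {c}) := by
    rw [mulQuotient_mk, mul_one, xSet_singleton]
  refine ⟨mulQuotient _ hdvd, LinearMap.lcomp _ _ _, fun s => rfl, fun φ => rfl,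
    fun hI => surjective_lcomp_of_mem_or_disjoint (I := varsIcc k a b) hcA hA' ?_ hμ,
    fun hI => ?_⟩
  · have haj : a < j := by
      by_contra! hja
      exact hI (Finset.Icc_subset_Icc hja hbk)
    by_cases hjb : j - 1 ≤ b
    · left
      simp only [mem_varsIcc, c]
      omega
    · right
      rw [Finset.disjoint_left]
      simp only [mem_varsIcc]
      omega
  · have hcI : c ∉ varsIcc k a b := by
      have hja := (Finset.mem_Icc.1 (hI (Finset.mem_Icc.2 ⟨le_rfl, hab⟩))).1
      simp only [mem_varsIcc, c]
      omega
    obtain ⟨e⟩ := Submodule.nonempty_quotient_equiv_quotient_colon _ _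
      (exists_sub_smul_xSetSdiffHom_mem_range hcA hA' hμ)
    rw [colon_range_lcomp_eq hA' hcI hμ, varsIcc_inter_varsIcc, xSet_singleton] at e
    exact ⟨e⟩
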